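/- Let D1, ..., Dk be closed convex cones in R^n such that for every i, cos∠(−D_i, Σ_{j≠i} D_j) ≤ 1 − β for some β ∈ (0,1]. Then √(δ(D1 + ⋯ + Dk)) ≤ β^{−(k−1)/2} · Σ_{i=1}^k √(δ(D_i)). -/

import Mathlib

open scoped Pointwise

open MeasureTheory ProbabilityTheory Set
open scoped RealInnerProductSpace

noncomputable def stdGaussian (n : ℕ) : Measure (EuclideanSpace ℝ (Fin n)) :=
  Measure.map (EuclideanSpace.equiv (Fin n) ℝ).symm
    (Measure.pi fun _ : Fin n => gaussianReal 0 1)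

/-- Statistical dimension via the sup formulation
`δ(K) = E[(sup{⟪g,y⟫ : y ∈ K ∩ Bⁿ})²]`. -/
noncomputable def statDim {n : ℕ} (K : Set (EuclideanSpace ℝ (Fin n))) : ℝ :=
  ∫ g, (sSup {r : ℝ | ∃ y, y ∈ K ∧ ‖y‖ ≤ 1 ∧ r = ⟪g, y⟫}) ^ 2 ∂(stdGaussian n)

/-- Gauge of an atomic set: `γ_A(x) = inf{λ ≥ 0 : x ∈ λ·conv(A ∪ {0})}`. -/
noncomputable def agauge {n : ℕ} (A : Set (EuclideanSpace ℝ (Fin n)))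
    (x : EuclideanSpace ℝ (Fin n)) : ℝ :=
  gauge (convexHull ℝ (insert 0 A)) x

/-- Descent cone `D(A,x) = cone{d : γ_A(x+d) ≤ γ_A(x)}`. -/
def descCone {n : ℕ} (A : Set (EuclideanSpace ℝ (Fin n))) (x : EuclideanSpace ℝ (Fin n)) :
    Set (EuclideanSpace ℝ (Fin n)) :=
  {d | ∃ c : ℝ, ∃ s, 0 ≤ c ∧ agauge A (x + s) ≤ agauge A x ∧ d = c • s}

/-!
The integrand of `statDim K` is the square of `h_K(g) = sup {⟪g, y⟫ : y ∈ K, ‖y‖ ≤ 1}`.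
If `y = x + z` with `x ∈ K`, `z ∈ K'` and `cos∠(-K, K') ≤ 1 - β`, then
`‖y‖² ≥ β ‖x‖²` and `‖y‖² ≥ β ‖z‖²`, so `‖y‖ ≤ 1` forces `‖x‖, ‖z‖ ≤ β^{-1/2}` and
`h_{K+K'} ≤ β^{-1/2} (h_K + h_{K'})` pointwise. Adding the cones `D i` one at a time (the angle
between `-D i` and a partial sum is controlled by the one with `Σ_{j≠i} D j`) gives
`h_{Σ D i} ≤ β^{-(k-1)/2} Σ h_{D i}`, and Minkowski's inequality in `L²` of the Gaussian measure
turns this into the bound on `√δ`.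
-/

section InnerProductSpace

variable {V : Type*} [NormedAddCommGroup V] [InnerProductSpace ℝ V]

def IsConeSet (K : Set V) : Prop :=
  ∀ c : ℝ, 0 ≤ c → ∀ x ∈ K, c • x ∈ K

noncomputable def ballSupport (K : Set V) (g : V) : ℝ :=
  sSup {r : ℝ | ∃ y, y ∈ K ∧ ‖y‖ ≤ 1 ∧ r = ⟪g, y⟫}

variable {K K' : Set V} {g y : V}

lemma real_inner_le_norm_of_norm_le_one (g : V) (hy : ‖y‖ ≤ 1) : ⟪g, y⟫ ≤ ‖g‖ :=
  (real_inner_le_norm g y).trans (mul_le_of_le_one_right (norm_nonneg g) hy)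

lemma inner_le_ballSupport (hy : y ∈ K) (hy1 : ‖y‖ ≤ 1) : ⟪g, y⟫ ≤ ballSupport K g := by
  refine le_csSup ⟨‖g‖, ?_⟩ ⟨y, hy, hy1, rfl⟩
  rintro _ ⟨z, -, hz, rfl⟩
  exact real_inner_le_norm_of_norm_le_one g hz

lemma ballSupport_le {a : ℝ} (h : ∀ y ∈ K, ‖y‖ ≤ 1 → ⟪g, y⟫ ≤ a) (ha : 0 ≤ a) :
    ballSupport K g ≤ a :=
  Real.sSup_le (by rintro _ ⟨y, hy, hy1, rfl⟩; exact h y hy hy1) ha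

lemma ballSupport_le_norm (K : Set V) (g : V) : ballSupport K g ≤ ‖g‖ :=
  ballSupport_le (fun _ _ hy1 => real_inner_le_norm_of_norm_le_one g hy1) (norm_nonneg g)

lemma ballSupport_zero (g : V) : ballSupport 0 g = 0 :=
  le_antisymm (ballSupport_le (fun y hy _ => by simp [Set.mem_zero.1 hy]) le_rfl)
    (by simpa using inner_le_ballSupport (g := g) (Set.zero_mem_zero (α := V)) (by simp))

@[simp]
lemma ballSupport_empty (g : V) : ballSupport ∅ g = 0 := by
  simp [ballSupport]

namespace IsConeSet

lemma zero_mem (hK : IsConeSet K) (hne : K.Nonempty) : (0 : V) ∈ K := by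
  obtain ⟨x, hx⟩ := hne
  simpa using hK 0 le_rfl x hx

lemma neg (hK : IsConeSet K) : IsConeSet (-K) := fun c hc x hx => by
  simpa [Set.mem_neg, smul_neg] using hK c hc (-x) hx

lemma finsetSum {ι : Type*} {s : Finset ι} {D : ι → Set V} (hD : ∀ i ∈ s, IsConeSet (D i)) :
    IsConeSet (∑ i ∈ s, D i) := by
  rintro c hc _ hx
  obtain ⟨y, hy, rfl⟩ := (Set.mem_finsetSum s D _).1 hx
  rw [Finset.smul_sum]
  exact Set.finsetSum_mem_finsetSum s D _ fun i hi => hD i hi c hc (y i) (hy hi)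

lemma inner_le_mul_norm_mul_norm (hK : IsConeSet K) (hK' : IsConeSet K') {c : ℝ}
    (h : ∀ u v, u ∈ K → v ∈ K' → ‖u‖ = 1 → ‖v‖ = 1 → ⟪u, v⟫ ≤ c)
    {u v : V} (hu : u ∈ K) (hv : v ∈ K') : ⟪u, v⟫ ≤ c * (‖u‖ * ‖v‖) := by
  rcases eq_or_ne u 0 with rfl | hu0
  · simp
  rcases eq_or_ne v 0 with rfl | hv0
  · simp
  have hpos : 0 < ‖u‖ * ‖v‖ := by positivity
  have hunit := h _ _ (hK _ (by positivity) u hu) (hK' _ (by positivity) v hv)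
    (norm_smul_inv_norm (𝕜 := ℝ) hu0) (norm_smul_inv_norm (𝕜 := ℝ) hv0)
  simp only [RCLike.ofReal_real_eq_id, id_eq] at hunit
  rw [real_inner_smul_left, real_inner_smul_right, ← mul_assoc, ← mul_inv,
    inv_mul_le_iff₀ hpos] at hunit
  linarith

lemma ballSupport_nonneg (hK : IsConeSet K) (g : V) : 0 ≤ ballSupport K g := by
  rcases K.eq_empty_or_nonempty with rfl | hne
  · simp
  · simpa using inner_le_ballSupport (g := g) (hK.zero_mem hne) (by simp)

lemma inner_le_norm_mul_ballSupport (hK : IsConeSet K) (hy : y ∈ K) (g : V) :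
    ⟪g, y⟫ ≤ ‖y‖ * ballSupport K g := by
  rcases eq_or_ne y 0 with rfl | hy0
  · simp
  have hunit := inner_le_ballSupport (g := g) (hK _ (by positivity) y hy)
    (norm_smul_inv_norm (𝕜 := ℝ) hy0).le
  simp only [RCLike.ofReal_real_eq_id, id_eq, real_inner_smul_right] at hunit
  rwa [inv_mul_le_iff₀ (by positivity)] at hunit

lemma lipschitzWith_ballSupport (hK : IsConeSet K) : LipschitzWith 1 (ballSupport K) := by
  refine LipschitzWith.of_le_add fun g g' => ballSupport_le (fun y hy hy1 => ?_)
    (add_nonneg (hK.ballSupport_nonneg g') dist_nonneg)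
  have hdiff : ⟪g - g', y⟫ ≤ dist g g' := by
    rw [dist_eq_norm]
    exact real_inner_le_norm_of_norm_le_one _ hy1
  have := inner_le_ballSupport (g := g') hy hy1
  rw [inner_sub_left] at hdiff
  linarith

end IsConeSet

lemma sqrt_mul_norm_le_norm_add {β : ℝ} (hβ0 : 0 ≤ β) (hβ1 : β ≤ 1) {x y : V}
    (h : ⟪-x, y⟫ ≤ (1 - β) * (‖x‖ * ‖y‖)) : √β * ‖x‖ ≤ ‖x + y‖ := by
  -- `‖x + y‖² ≥ ‖x‖² + ‖y‖² - 2(1 - β)‖x‖‖y‖ = β‖x‖² + (1 - β)(‖x‖ - ‖y‖)² + β‖y‖²`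
  have hsq : β * ‖x‖ ^ 2 ≤ ‖x + y‖ ^ 2 := by
    rw [inner_neg_left] at h
    nlinarith [norm_add_sq_real x y, sq_nonneg (‖x‖ - ‖y‖), sq_nonneg ‖y‖,
      mul_nonneg hβ0 (sq_nonneg ‖y‖)]
  calc √β * ‖x‖ = √(β * ‖x‖ ^ 2) := by
        rw [Real.sqrt_mul hβ0, Real.sqrt_sq (norm_nonneg x)]
    _ ≤ √(‖x + y‖ ^ 2) := Real.sqrt_le_sqrt hsq
    _ = ‖x + y‖ := Real.sqrt_sq (norm_nonneg _)

lemma ballSupport_add_le {β : ℝ} (hβ0 : 0 < β) (hβ1 : β ≤ 1) (hK : IsConeSet K)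
    (hK' : IsConeSet K') (hangle : ∀ u ∈ -K, ∀ v ∈ K', ⟪u, v⟫ ≤ (1 - β) * (‖u‖ * ‖v‖)) (g : V) :
    ballSupport (K + K') g ≤ (√β)⁻¹ * (ballSupport K g + ballSupport K' g) := by
  have hsqrtβ : 0 < √β := Real.sqrt_pos.2 hβ0
  have hnorm_le {x z : V} (hxz : ⟪-x, z⟫ ≤ (1 - β) * (‖x‖ * ‖z‖)) (h1 : ‖x + z‖ ≤ 1) :
      ‖x‖ ≤ (√β)⁻¹ := by
    calc ‖x‖ = (√β)⁻¹ * (√β * ‖x‖) := by field_simp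
      _ ≤ (√β)⁻¹ * 1 := by gcongr; exact (sqrt_mul_norm_le_norm_add hβ0.le hβ1 hxz).trans h1
      _ = (√β)⁻¹ := mul_one _
  refine ballSupport_le ?_ (by positivity [hK.ballSupport_nonneg g, hK'.ballSupport_nonneg g])
  rintro _ ⟨x, hx, z, hz, rfl⟩ h1
  have hxz := hangle (-x) (by simpa using hx) z hz
  rw [norm_neg] at hxz
  have hzx : ⟪-z, x⟫ ≤ (1 - β) * (‖z‖ * ‖x‖) := by
    rwa [inner_neg_left, real_inner_comm, ← inner_neg_left, mul_comm ‖z‖]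
  calc ⟪g, x + z⟫ = ⟪g, x⟫ + ⟪g, z⟫ := inner_add_right g x z
    _ ≤ ‖x‖ * ballSupport K g + ‖z‖ * ballSupport K' g :=
        add_le_add (hK.inner_le_norm_mul_ballSupport hx g) (hK'.inner_le_norm_mul_ballSupport hz g)
    _ ≤ (√β)⁻¹ * ballSupport K g + (√β)⁻¹ * ballSupport K' g := by
        gcongr
        exacts [hK.ballSupport_nonneg g, hnorm_le hxz h1, hK'.ballSupport_nonneg g,
          hnorm_le hzx (by rwa [add_comm])]
    _ = (√β)⁻¹ * (ballSupport K g + ballSupport K' g) := (mul_add _ _ _).symm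

end InnerProductSpace

lemma Set.finsetSum_subset_finsetSum_of_subset {α ι : Type*} [AddCommMonoid α] [DecidableEq ι]
    {D : ι → Set α} {s t : Finset ι} (hst : s ⊆ t) (h0 : ∀ i ∈ t \ s, (0 : α) ∈ D i) :
    ∑ i ∈ s, D i ⊆ ∑ i ∈ t, D i := by
  rw [← Finset.sum_sdiff hst]
  exact Set.subset_add_right _ (by simpa using Set.finsetSum_mem_finsetSum (t \ s) D 0 h0)

section FinsetSum

variable {V ι : Type*} [NormedAddCommGroup V] [InnerProductSpace ℝ V] [Fintype ι] [DecidableEq ι]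
  {D : ι → Set V}

lemma ballSupport_finsetSum_le {β : ℝ} (hβ0 : 0 < β) (hβ1 : β ≤ 1) (hD : ∀ i, IsConeSet (D i))
    (h0 : ∀ i, (0 : V) ∈ D i)
    (hangle : ∀ i, ∀ u ∈ -D i, ∀ v ∈ ∑ j ∈ Finset.univ.erase i, D j,
      ⟪u, v⟫ ≤ (1 - β) * (‖u‖ * ‖v‖))
    (g : V) (s : Finset ι) :
    ballSupport (∑ i ∈ s, D i) g ≤
      β ^ (-(((s.card : ℝ) - 1) / 2)) * ∑ i ∈ s, ballSupport (D i) g := by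
  induction s using Finset.induction_on with
  | empty => simp [ballSupport_zero]
  | insert a t ha ih =>
    rcases t.eq_empty_or_nonempty with rfl | ht
    · simp
    have hsub : ∑ j ∈ t, D j ⊆ ∑ j ∈ Finset.univ.erase a, D j :=
      Set.finsetSum_subset_finsetSum_of_subset (fun j hj => Finset.mem_erase.2
        ⟨fun h => ha (h ▸ hj), Finset.mem_univ j⟩) fun j _ => h0 j
    have hpair := ballSupport_add_le hβ0 hβ1 (hD a) (IsConeSet.finsetSum fun j _ => hD j)
      (fun u hu v hv => hangle a u hu v (hsub hv)) g
    have hcard : (1 : ℝ) ≤ t.card := by exact_mod_cast ht.card_pos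
    have hS : 0 ≤ ∑ i ∈ t, ballSupport (D i) g :=
      Finset.sum_nonneg fun i _ => (hD i).ballSupport_nonneg g
    rw [Real.sqrt_eq_rpow, ← Real.rpow_neg hβ0.le] at hpair
    have hh : 0 ≤ ballSupport (D a) g := (hD a).ballSupport_nonneg g
    rw [Finset.sum_insert ha, Finset.sum_insert ha, Finset.card_insert_of_notMem ha]
    calc ballSupport (D a + ∑ i ∈ t, D i) g
        ≤ β ^ (-(1 / 2 : ℝ)) * (ballSupport (D a) g +
            β ^ (-(((t.card : ℝ) - 1) / 2)) * ∑ i ∈ t, ballSupport (D i) g) :=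
          hpair.trans (by gcongr)
      _ = β ^ (-(1 / 2 : ℝ)) * ballSupport (D a) g +
            β ^ (-((t.card : ℝ) / 2)) * ∑ i ∈ t, ballSupport (D i) g := by
          rw [mul_add, ← mul_assoc, ← Real.rpow_add hβ0]
          ring_nf
      _ ≤ β ^ (-((t.card : ℝ) / 2)) * ballSupport (D a) g +
            β ^ (-((t.card : ℝ) / 2)) * ∑ i ∈ t, ballSupport (D i) g := by
          have hexp := Real.rpow_le_rpow_of_exponent_ge hβ0 hβ1
            (show -((t.card : ℝ) / 2) ≤ -(1 / 2) by linarith)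
          gcongr
      _ = _ := by
          push_cast
          ring_nf

end FinsetSum

section L2

variable {α : Type*} [MeasurableSpace α] {μ : Measure α}

lemma integral_mul_le_sqrt_integral_sq_mul_sqrt {f g : α → ℝ} (hf0 : 0 ≤ᵐ[μ] f)
    (hg0 : 0 ≤ᵐ[μ] g) (hf : MemLp f 2 μ) (hg : MemLp g 2 μ) :
    ∫ x, f x * g x ∂μ ≤ √(∫ x, f x ^ 2 ∂μ) * √(∫ x, g x ^ 2 ∂μ) := by
  have hrpow (h : α → ℝ) : (∫ x, h x ^ (2 : ℝ) ∂μ) ^ (1 / (2 : ℝ)) = √(∫ x, h x ^ 2 ∂μ) := by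
    simp [Real.sqrt_eq_rpow]
  rw [← hrpow f, ← hrpow g]
  exact integral_mul_le_Lp_mul_Lq_of_nonneg Real.HolderConjugate.two_two hf0 hg0
    (by simpa using hf) (by simpa using hg)

lemma integral_sq_finsetSum_le {ι : Type*} (s : Finset ι) {f : ι → α → ℝ}
    (hf0 : ∀ i, 0 ≤ᵐ[μ] f i) (hf : ∀ i, MemLp (f i) 2 μ) :
    ∫ x, (∑ i ∈ s, f i x) ^ 2 ∂μ ≤ (∑ i ∈ s, √(∫ x, f i x ^ 2 ∂μ)) ^ 2 := by
  have hint (i j : ι) : Integrable (fun x => f i x * f j x) μ := (hf i).integrable_mul (hf j)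
  simp_rw [sq (∑ i ∈ s, _), Finset.sum_mul_sum]
  rw [integral_finsetSum _ fun i _ => integrable_finsetSum _ fun j _ => hint i j]
  refine Finset.sum_le_sum fun i _ => ?_
  rw [integral_finsetSum _ fun j _ => hint i j]
  exact Finset.sum_le_sum fun j _ =>
    integral_mul_le_sqrt_integral_sq_mul_sqrt (hf0 i) (hf0 j) (hf i) (hf j)

lemma sqrt_integral_sq_le_mul_sum {ι : Type*} (s : Finset ι) {F : α → ℝ} {f : ι → α → ℝ} {C : ℝ}
    (hC : 0 ≤ C) (hF0 : ∀ x, 0 ≤ F x) (hF : ∀ x, F x ≤ C * ∑ i ∈ s, f i x)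
    (hf0 : ∀ i, 0 ≤ᵐ[μ] f i) (hf : ∀ i, MemLp (f i) 2 μ) :
    √(∫ x, F x ^ 2 ∂μ) ≤ C * ∑ i ∈ s, √(∫ x, f i x ^ 2 ∂μ) := by
  have hsum : MemLp (fun x => ∑ i ∈ s, f i x) 2 μ := memLp_finsetSum s fun i _ => hf i
  have hdom : ∫ x, F x ^ 2 ∂μ ≤ ∫ x, (C * ∑ i ∈ s, f i x) ^ 2 ∂μ :=
    integral_mono_of_nonneg (ae_of_all _ fun x => sq_nonneg _) ((hsum.const_mul C).integrable_sq)
      (ae_of_all _ fun x => pow_le_pow_left₀ (hF0 x) (hF x) 2)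
  calc √(∫ x, F x ^ 2 ∂μ)
      ≤ √(C ^ 2 * (∑ i ∈ s, √(∫ x, f i x ^ 2 ∂μ)) ^ 2) := by
        refine Real.sqrt_le_sqrt (hdom.trans ?_)
        simp_rw [mul_pow]
        rw [integral_const_mul]
        gcongr
        exact integral_sq_finsetSum_le s hf0 hf
    _ = C * ∑ i ∈ s, √(∫ x, f i x ^ 2 ∂μ) := by
        rw [← mul_pow, Real.sqrt_sq (by positivity)]

end L2

section Gaussian

variable {n : ℕ}

lemma stdGaussian_eq_stdGaussian_euclideanSpace :
    stdGaussian n = ProbabilityTheory.stdGaussian (EuclideanSpace ℝ (Fin n)) := by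
  rw [_root_.stdGaussian, ← map_pi_eq_stdGaussian]
  rfl

lemma IsConeSet.memLp_ballSupport {K : Set (EuclideanSpace ℝ (Fin n))} (hK : IsConeSet K) :
    MemLp (ballSupport K) 2 (stdGaussian n) := by
  rw [stdGaussian_eq_stdGaussian_euclideanSpace]
  refine IsGaussian.memLp_two_id.of_le hK.lipschitzWith_ballSupport.continuous.aestronglyMeasurable
    (ae_of_all _ fun g => ?_)
  rw [Real.norm_of_nonneg (hK.ballSupport_nonneg g)]
  exact ballSupport_le_norm K g

@[simp]
lemma statDim_empty : statDim (∅ : Set (EuclideanSpace ℝ (Fin n))) = 0 := by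
  simp [statDim]

end Gaussian

theorem statDim_multi_sum_bound_general {n k : ℕ} (D : Fin k → Set (EuclideanSpace ℝ (Fin n)))
    (hDcone : ∀ i, ∀ c : ℝ, 0 ≤ c → ∀ x ∈ D i, c • x ∈ D i)
    (β : ℝ) (hβ : β ∈ Set.Ioc (0 : ℝ) 1)
    (hangle : ∀ i, ∀ u v, u ∈ -(D i) → v ∈ ∑ j ∈ Finset.univ.erase i, D j →
      ‖u‖ = 1 → ‖v‖ = 1 → ⟪u, v⟫ ≤ 1 - β) :
    Real.sqrt (statDim (∑ i, D i)) ≤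
      β ^ (-(((k : ℝ) - 1) / 2)) * ∑ i, Real.sqrt (statDim (D i)) := by
  obtain ⟨hβ0, hβ1⟩ := hβ
  have hD : ∀ i, IsConeSet (D i) := hDcone
  have hcos : ∀ i, ∀ u ∈ -D i, ∀ v ∈ ∑ j ∈ Finset.univ.erase i, D j,
      ⟪u, v⟫ ≤ (1 - β) * (‖u‖ * ‖v‖) := fun i _ hu _ hv =>
    (hD i).neg.inner_le_mul_norm_mul_norm (IsConeSet.finsetSum fun j _ => hD j) (hangle i) hu hv
  by_cases h0 : ∀ i, (0 : EuclideanSpace ℝ (Fin n)) ∈ D i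
  · have hpointwise (g : EuclideanSpace ℝ (Fin n)) :=
      ballSupport_finsetSum_le hβ0 hβ1 hD h0 hcos g Finset.univ
    simp only [Finset.card_univ, Fintype.card_fin] at hpointwise
    exact sqrt_integral_sq_le_mul_sum Finset.univ (Real.rpow_nonneg hβ0.le _)
      (IsConeSet.finsetSum fun i _ => hD i).ballSupport_nonneg hpointwise
      (fun i => ae_of_all _ (hD i).ballSupport_nonneg) fun i => (hD i).memLp_ballSupport
  · -- a cone missing `0` is empty, and then so is the whole sum
    obtain ⟨i, hi⟩ := not_forall.1 h0
    have hempty : D i = ∅ := not_nonempty_iff_eq_empty.1 fun hne => hi ((hD i).zero_mem hne)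
    rw [← Finset.add_sum_erase _ _ (Finset.mem_univ i), hempty, Set.empty_add, statDim_empty,
      Real.sqrt_zero]
    exact mul_nonneg (Real.rpow_nonneg hβ0.le _) (Finset.sum_nonneg fun j _ => Real.sqrt_nonneg _)

/-- If the cones `D i` are `β`-incoherent, then
`√δ(D₁ + ⋯ + D_k) ≤ β^{-(k-1)/2} Σᵢ √δ(Dᵢ)`. -/
theorem statDim_multi_sum_bound {n k : ℕ} (D : Fin k → Set (EuclideanSpace ℝ (Fin n)))
    (hDc : ∀ i, IsClosed (D i)) (hDconv : ∀ i, Convex ℝ (D i))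
    (hDcone : ∀ i, ∀ c : ℝ, 0 ≤ c → ∀ x ∈ D i, c • x ∈ D i)
    (β : ℝ) (hβ : β ∈ Set.Ioc (0 : ℝ) 1)
    (hangle : ∀ i, ∀ u v, u ∈ -(D i) → v ∈ ∑ j ∈ Finset.univ.erase i, D j →
      ‖u‖ = 1 → ‖v‖ = 1 → ⟪u, v⟫ ≤ 1 - β) :
    Real.sqrt (statDim (∑ i, D i)) ≤
      β ^ (-(((k : ℝ) - 1) / 2)) * ∑ i, Real.sqrt (statDim (D i)) :=
  statDim_multi_sum_bound_general D hDcone β hβ hangle
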